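/- The word xyzyx is an isoterm for the 6-element Brandt monoid B_2^1: any word v over {x, y, z} such that the identity xyzyx ≈ v holds in B_2^1 must equal xyzyx. -/

import Mathlib

/-- The 6-element Brandt monoid `B₂¹` realized as a set of `2×2` matrices over `ℚ`. -/
def B21 : Set (Matrix (Fin 2) (Fin 2) ℚ) :=
  {0, Matrix.single 0 0 1, Matrix.single 0 1 1,
   Matrix.single 1 0 1, Matrix.single 1 1 1, 1}

/-!
Write `E₁₂, E₂₁` for the matrix units in `B₂¹`; they satisfy `E₁₂² = 0` and `E₁₂ E₂₁ E₁₂ = E₁₂`.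
Suppose `xyzyx ≈ v` holds in `B₂¹`. Substituting `z ↦ E₁₂` and `x, y ↦ 1` gives `E₁₂ = E₁₂ⁿ`,
where `n` counts the `z`s in `v`, so `v = v₁ z v₂` with `z` in neither `v₁` nor `v₂`.
Substituting `z ↦ E₂₁`, `x ↦ E₁₂`, `y ↦ 1` gives `E₁₂ = E₁₂ᵃ E₂₁ E₁₂ᵇ`, which forces exactly one
`x` in each of `v₁` and `v₂`; likewise for `y`. So `v₁, v₂ ∈ {xy, yx}`, and the substitution
`x, z ↦ E₁₂`, `y ↦ E₂₁` rules out every choice except `v₁ = xy`, `v₂ = yx`.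
-/

open Function

section Words

variable {α M : Type*} [DecidableEq α]

lemma update_mem {S : Set M} {f : α → M} (hf : ∀ i, f i ∈ S) {b : M} (hb : b ∈ S) (k i : α) :
    update f k b i ∈ S := by
  rw [update_apply]
  split_ifs
  exacts [hb, hf i]

lemma List.exists_eq_append_cons_of_count_eq_one {l : List α} {k : α} (h : l.count k = 1) :
    ∃ l₁ l₂, l = l₁ ++ k :: l₂ ∧ k ∉ l₁ ∧ k ∉ l₂ := by
  obtain ⟨l₁, l₂, rfl⟩ := List.append_of_mem (List.count_pos_iff.1 (h ▸ Nat.one_pos))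
  rw [List.count_append, List.count_cons_self] at h
  exact ⟨l₁, l₂, rfl, List.count_eq_zero.1 (by omega), List.count_eq_zero.1 (by omega)⟩

variable [Monoid M]

def SatisfiesIdentity (S : Set M) (u v : List α) : Prop :=
  ∀ φ : α → M, (∀ i, φ i ∈ S) → (u.map φ).prod = (v.map φ).prod

lemma prod_map_mulSingle (l : List α) (j : α) (a : M) :
    (l.map (Pi.mulSingle j a)).prod = a ^ l.count j := by
  rw [l.prod_map_eq_pow_single j _ fun _ hij _ => Pi.mulSingle_eq_of_ne (M := fun _ ↦ M) hij a,
    Pi.mulSingle_eq_same]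

lemma prod_map_update_of_notMem {l : List α} {k : α} (hk : k ∉ l) (f : α → M) (b : M) :
    (l.map (update f k b)).prod = (l.map f).prod :=
  congrArg _ <| List.map_congr_left fun _ hi => update_of_ne (ne_of_mem_of_not_mem hi hk) b f

lemma prod_map_update_mulSingle_append_cons {l₁ l₂ : List α} {k : α} (h₁ : k ∉ l₁) (h₂ : k ∉ l₂)
    (j : α) (a b : M) :
    ((l₁ ++ k :: l₂).map (update (Pi.mulSingle j a) k b)).prod
      = a ^ l₁.count j * b * a ^ l₂.count j := by
  rw [List.map_append, List.map_cons, List.prod_append, List.prod_cons, update_self,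
    prod_map_update_of_notMem h₁, prod_map_update_of_notMem h₂, prod_map_mulSingle,
    prod_map_mulSingle, mul_assoc]

lemma mulSingle_mem {S : Set M} (hS : 1 ∈ S) {a : M} (ha : a ∈ S) (j i : α) :
    (Pi.mulSingle j a : α → M) i ∈ S := by
  rw [Pi.mulSingle_apply]
  split_ifs <;> assumption

end Words

section BrandtMonoid

open Matrix

local notation "E₁₂" => (single 0 1 1 : Matrix (Fin 2) (Fin 2) ℚ)
local notation "E₂₁" => (single 1 0 1 : Matrix (Fin 2) (Fin 2) ℚ)

lemma E₁₂_pow_add_two (n : ℕ) : E₁₂ ^ (n + 2) = 0 := by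
  simp [pow_add, pow_two]

lemma E₁₂_ne_zero : E₁₂ ≠ 0 := fun h => by simpa using congr_fun₂ h 0 1

lemma E₁₂_pow_eq_self_iff {n : ℕ} : E₁₂ ^ n = E₁₂ ↔ n = 1 := by
  refine ⟨fun h => ?_, by rintro rfl; exact pow_one _⟩
  match n, h with
  | 0, h => simpa using congr_fun₂ h 0 0
  | 1, _ => rfl
  | n + 2, h => exact absurd (E₁₂_pow_add_two n ▸ h).symm E₁₂_ne_zero

lemma E₁₂_pow_mul_E₂₁_mul_E₁₂_pow_eq_E₁₂_iff {m n : ℕ} :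
    E₁₂ ^ m * E₂₁ * E₁₂ ^ n = E₁₂ ↔ m = 1 ∧ n = 1 := by
  refine ⟨fun h => ?_, fun ⟨hm, hn⟩ => by simp [hm, hn]⟩
  match m, n, h with
  | 0, 0, h | 0, 1, h | 1, 0, h => simpa using congr_fun₂ h 0 1
  | 1, 1, _ => exact ⟨rfl, rfl⟩
  | m + 2, _, h => simp [E₁₂_pow_add_two, E₁₂_ne_zero.symm] at h
  | _, n + 2, h => simp [E₁₂_pow_add_two, E₁₂_ne_zero.symm] at h

lemma one_mem_B21 : (1 : Matrix (Fin 2) (Fin 2) ℚ) ∈ B21 := by simp [B21]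

lemma E₁₂_mem_B21 : E₁₂ ∈ B21 := by simp [B21]

lemma E₂₁_mem_B21 : E₂₁ ∈ B21 := by simp [B21]

local notation "xyzyx" => ([0, 1, 2, 1, 0] : List (Fin 3))

lemma count_two_eq_one_of_satisfiesIdentity {v : List (Fin 3)}
    (hv : SatisfiesIdentity B21 xyzyx v) : v.count 2 = 1 := by
  have h := hv (Pi.mulSingle 2 E₁₂) (mulSingle_mem one_mem_B21 E₁₂_mem_B21 2)
  rw [prod_map_mulSingle, prod_map_mulSingle] at h
  exact E₁₂_pow_eq_self_iff.1 (by simpa using h.symm)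

lemma count_eq_one_of_satisfiesIdentity {v₁ v₂ : List (Fin 3)}
    (hv : SatisfiesIdentity B21 xyzyx (v₁ ++ 2 :: v₂)) (h₁ : 2 ∉ v₁) (h₂ : 2 ∉ v₂)
    {j : Fin 3} (hj : j ≠ 2) : v₁.count j = 1 ∧ v₂.count j = 1 := by
  have h := hv (update (Pi.mulSingle j E₁₂) 2 E₂₁)
    (update_mem (mulSingle_mem one_mem_B21 E₁₂_mem_B21 j) E₂₁_mem_B21 2)
  rw [show xyzyx = [0, 1] ++ 2 :: [1, 0] from rfl, prod_map_update_mulSingle_append_cons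
    (by decide) (by decide), prod_map_update_mulSingle_append_cons h₁ h₂] at h
  have hxy : [0, 1].count j = 1 ∧ [1, 0].count j = 1 := by fin_cases j <;> simp_all
  rw [hxy.1, hxy.2, E₁₂_pow_mul_E₂₁_mul_E₁₂_pow_eq_E₁₂_iff.2 ⟨rfl, rfl⟩] at h
  exact E₁₂_pow_mul_E₂₁_mul_E₁₂_pow_eq_E₁₂_iff.1 h.symm

lemma eq_xyzyx_of_satisfiesIdentity {v₁ v₂ : List (Fin 3)}
    (hv : SatisfiesIdentity B21 xyzyx (v₁ ++ 2 :: v₂))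
    (h₁ : v₁ = [0, 1] ∨ v₁ = [1, 0]) (h₂ : v₂ = [0, 1] ∨ v₂ = [1, 0]) :
    v₁ ++ 2 :: v₂ = xyzyx := by
  have h := hv ![E₁₂, E₂₁, E₁₂] fun i => by
    fin_cases i
    exacts [E₁₂_mem_B21, E₂₁_mem_B21, E₁₂_mem_B21]
  -- `x` and `z` both go to `E₁₂`, so an `x` next to `z` makes the product vanish.
  rcases h₁ with rfl | rfl <;> rcases h₂ with rfl | rfl
  all_goals first | rfl | simp [E₁₂_ne_zero] at h

end BrandtMonoid

lemma eq_xy_or_eq_yx_of_count_eq_one {w : List (Fin 3)} (h₀ : w.count 0 = 1) (h₁ : w.count 1 = 1)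
    (h₂ : 2 ∉ w) : w = [0, 1] ∨ w = [1, 0] :=
  List.perm_pair.1 <| List.perm_iff_count.2 fun a => by
    fin_cases a <;> simp [h₀, h₁, List.count_eq_zero.2 h₂]

/-- The word `xyzyx` (with `x := 0`, `y := 1`, `z := 2`) is an isoterm for the Brandt
monoid `B₂¹`: any word `v` over `{x, y, z}` such that `xyzyx ≈ v` holds under every
substitution of elements of `B₂¹` must equal `xyzyx`. -/
theorem xyzyx_isoterm_for_B21 :
    ∀ v : List (Fin 3),
      (∀ φ : Fin 3 → Matrix (Fin 2) (Fin 2) ℚ, (∀ i, φ i ∈ B21) →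
        (([0, 1, 2, 1, 0] : List (Fin 3)).map φ).prod = (v.map φ).prod) →
      v = [0, 1, 2, 1, 0] := by
  intro v hv
  obtain ⟨v₁, v₂, rfl, h₁, h₂⟩ :=
    List.exists_eq_append_cons_of_count_eq_one (count_two_eq_one_of_satisfiesIdentity hv)
  obtain ⟨hx₁, hx₂⟩ := count_eq_one_of_satisfiesIdentity hv h₁ h₂ (j := 0) (by decide)
  obtain ⟨hy₁, hy₂⟩ := count_eq_one_of_satisfiesIdentity hv h₁ h₂ (j := 1) (by decide)
  exact eq_xyzyx_of_satisfiesIdentity hv (eq_xy_or_eq_yx_of_count_eq_one hx₁ hy₁ h₁)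
    (eq_xy_or_eq_yx_of_count_eq_one hx₂ hy₂ h₂)
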